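/- Let l ≥ 1 and let a, b, c : ℤ → ℂ be l-periodic sequences. Let p be an integer, let T = tr A_l(p), let D = det A_l(p), assume D ≠ 0, and let d be a complex number with d² = D. Then for every integer m ≥ 1, K_{lm−1}(p+1) = d^{m−1}·U_{m−1}(T/(2d))·K_{l−1}(p+1). -/

import Mathlib

/-!
Expanding the tridiagonal determinant along its first row gives the three-term recurrence
`K_{n+1}(p) = a_p K_n(p+1) - b_p c_p K_{n-1}(p+2)`, which says exactly that the first column of
`A_n(p)` is `(K_n(p), K_{n-1}(p+1))`. By periodicity `A_{lm}(p) = A_l(p)^m`, and by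
Cayley–Hamilton a `2 × 2` matrix `M` with trace `2dx` and determinant `d²` has
`M^{n+1} = d^n U_n(x) M - d^{n+1} U_{n-1}(x) I`. Comparing `(1,0)` entries gives the theorem.
-/

/-- The continuant `K_n(p)` of the sequences `a b c : ℤ → ℂ`: the determinant of the
`n × n` tridiagonal matrix with diagonal `a_p, …, a_{p+n-1}`, superdiagonal
`b_p, …, b_{p+n-2}` and subdiagonal `c_p, …, c_{p+n-2}`; it equals `1` for `n = 0`
and `0` for `n < 0`. -/
noncomputable def contK (a b c : ℤ → ℂ) (p n : ℤ) : ℂ :=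
  if n < 0 then 0 else
    Matrix.det (Matrix.of fun i j : Fin n.toNat =>
      if (i : ℕ) = (j : ℕ) then a (p + (i : ℕ))
      else if (i : ℕ) + 1 = (j : ℕ) then b (p + (i : ℕ))
      else if (i : ℕ) = (j : ℕ) + 1 then c (p + (j : ℕ))
      else 0)

/-- The 2×2 matrix `L(α, β)` with first row `(α, β)` and second row `(1, 0)`. -/
def Lmat (α β : ℂ) : Matrix (Fin 2) (Fin 2) ℂ := !![α, β; 1, 0]

/-- `A_n(p) = L(a_p, −b_p c_p) ⋯ L(a_{p+n−1}, −b_{p+n−1} c_{p+n−1})`. -/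
noncomputable def Amat (a b c : ℤ → ℂ) (p : ℤ) (n : ℕ) : Matrix (Fin 2) (Fin 2) ℂ :=
  ((List.range n).map (fun i => Lmat (a (p + (i : ℕ))) (-(b (p + (i : ℕ)) * c (p + (i : ℕ)))))).prod

open Matrix Polynomial Function

namespace Matrix

variable {R : Type*} [CommRing R]

theorem det_succ_succ_of_first_row_col_sparse {n : ℕ} (M : Matrix (Fin (n + 2)) (Fin (n + 2)) R)
    (hrow : ∀ j : Fin n, M 0 j.succ.succ = 0) (hcol : ∀ i : Fin n, M i.succ.succ 0 = 0) :
    M.det = M 0 0 * (M.submatrix Fin.succ Fin.succ).det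
      - M 0 1 * M 1 0 * ((M.submatrix Fin.succ Fin.succ).submatrix Fin.succ Fin.succ).det := by
  have hminor : (M.submatrix Fin.succ (Fin.succAbove 1)).det
      = M 1 0 * ((M.submatrix Fin.succ Fin.succ).submatrix Fin.succ Fin.succ).det := by
    rw [det_succ_column_zero, Fin.sum_univ_succ]
    simp [hcol, Fin.succAbove_of_le_castSucc, Fin.le_def, Function.comp_def]
  rw [det_succ_row_zero, Fin.sum_univ_succ, Fin.sum_univ_succ]
  simp only [Fin.succ_zero_eq_one, Fin.succAbove_zero, Fin.val_succ, Fin.coe_ofNat_eq_mod,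
    Nat.zero_mod, Nat.one_mod, pow_zero, pow_one, one_mul, neg_mul, hminor, hrow, mul_zero,
    zero_mul, Finset.sum_const_zero, add_zero, submatrix_submatrix]
  ring

theorem sq_fin_two_eq_trace_smul_sub_det_smul (M : Matrix (Fin 2) (Fin 2) R) :
    M ^ 2 = M.trace • M - M.det • (1 : Matrix (Fin 2) (Fin 2) R) := by
  ext i j
  fin_cases i <;> fin_cases j <;>
    simp [sq, mul_apply, trace_fin_two, det_fin_two] <;> ring

section Chebyshev

variable {M : Matrix (Fin 2) (Fin 2) R} {d x : R}

theorem pow_succ_fin_two_eq_chebyshev_U (htr : M.trace = 2 * d * x) (hdet : M.det = d ^ 2)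
    (n : ℕ) :
    M ^ (n + 1) = (d ^ n * (Chebyshev.U R n).eval x) • M
      - (d ^ (n + 1) * (Chebyshev.U R (n - 1)).eval x) • (1 : Matrix (Fin 2) (Fin 2) R) := by
  induction n with
  | zero => simp
  | succ n ih =>
    have hU : (Chebyshev.U R (n + 1)).eval x
        = 2 * x * (Chebyshev.U R n).eval x - (Chebyshev.U R (n - 1)).eval x := by
      simp [Chebyshev.U_add_one]
    rw [pow_succ, ih, sub_mul, smul_mul_assoc, smul_mul_assoc, one_mul, ← sq,
      sq_fin_two_eq_trace_smul_sub_det_smul, htr, hdet]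
    push_cast
    rw [add_sub_cancel_right, hU]
    module

theorem pow_apply_one_zero_fin_two_eq_chebyshev_U (htr : M.trace = 2 * d * x)
    (hdet : M.det = d ^ 2) (n : ℕ) :
    (M ^ n) 1 0 = d ^ (n - 1) * (Chebyshev.U R (n - 1)).eval x * M 1 0 := by
  -- at `n = 0` the truncated exponent `n - 1` is harmless since `U_{-1} = 0`
  cases n with
  | zero => simp
  | succ n => simp [pow_succ_fin_two_eq_chebyshev_U htr hdet]

end Chebyshev

end Matrix

section Continuant

variable (a b c : ℤ → ℂ)

noncomputable def contMatrix (p : ℤ) (n : ℕ) : Matrix (Fin n) (Fin n) ℂ :=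
  Matrix.of fun i j : Fin n =>
    if (i : ℕ) = (j : ℕ) then a (p + (i : ℕ))
    else if (i : ℕ) + 1 = (j : ℕ) then b (p + (i : ℕ))
    else if (i : ℕ) = (j : ℕ) + 1 then c (p + (j : ℕ))
    else 0

theorem contK_natCast (p : ℤ) (n : ℕ) : contK a b c p n = (contMatrix a b c p n).det := by
  rw [contK, if_neg (by omega)]
  rfl

theorem contK_of_neg {p n : ℤ} (hn : n < 0) : contK a b c p n = 0 := by
  rw [contK, if_pos hn]

theorem contK_zero (p : ℤ) : contK a b c p 0 = 1 := by
  simpa using contK_natCast a b c p 0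

theorem contMatrix_submatrix_succ (p : ℤ) (n : ℕ) :
    (contMatrix a b c p (n + 1)).submatrix Fin.succ Fin.succ = contMatrix a b c (p + 1) n := by
  ext i j
  simp only [contMatrix, submatrix_apply, of_apply, Fin.val_succ]
  split_ifs <;> first | omega | rfl | (congr 1; push_cast; ring)

theorem contK_succ (p : ℤ) (n : ℕ) :
    contK a b c p (n + 1)
      = a p * contK a b c (p + 1) n - b p * c p * contK a b c (p + 2) (n - 1) := by
  cases n with
  | zero =>
    have hK1 : contK a b c p 1 = a p := by
      rw [← Nat.cast_one, contK_natCast]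
      simp [contMatrix]
    simp [contK_of_neg, contK_zero, hK1]
  | succ n =>
    have hM := det_succ_succ_of_first_row_col_sparse (contMatrix a b c p (n + 2))
      (by intro j; simp [contMatrix]) (by intro i; simp [contMatrix])
    rw [contMatrix_submatrix_succ, contMatrix_submatrix_succ, add_assoc, one_add_one_eq_two] at hM
    rw [show ((n + 1 : ℕ) : ℤ) + 1 = (n + 2 : ℕ) by push_cast; ring,
      show ((n + 1 : ℕ) : ℤ) - 1 = n by push_cast; ring, contK_natCast, contK_natCast,
      contK_natCast, hM]
    simp [contMatrix]

end Continuant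

section TransferMatrix

variable (a b c : ℤ → ℂ)

theorem Amat_zero (p : ℤ) : Amat a b c p 0 = 1 := rfl

theorem Amat_add (p : ℤ) (m n : ℕ) :
    Amat a b c p (m + n) = Amat a b c p m * Amat a b c (p + m) n := by
  simp only [Amat, List.range_add, List.map_append, List.prod_append, List.map_map]
  congr 3
  ext i
  simp [add_assoc]

theorem Amat_succ (p : ℤ) (n : ℕ) :
    Amat a b c p (n + 1) = Lmat (a p) (-(b p * c p)) * Amat a b c (p + 1) n := by
  rw [add_comm, Amat_add]
  simp [Amat]

theorem Amat_apply_zero_zero_and_one_zero (n : ℕ) (p : ℤ) :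
    Amat a b c p n 0 0 = contK a b c p n ∧ Amat a b c p n 1 0 = contK a b c (p + 1) (n - 1) := by
  induction n generalizing p with
  | zero => simp [Amat_zero, contK_zero, contK_of_neg]
  | succ n ih =>
    obtain ⟨h00, h10⟩ := ih (p + 1)
    rw [Amat_succ, Lmat]
    simp [mul_apply, h00, h10, contK_succ, add_assoc, one_add_one_eq_two, sub_eq_add_neg]

theorem Amat_apply_one_zero (p : ℤ) (n : ℕ) :
    Amat a b c p n 1 0 = contK a b c (p + 1) (n - 1) :=
  (Amat_apply_zero_zero_and_one_zero a b c n p).2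

variable {a b c}

theorem Amat_add_period {L : ℤ} (ha : Periodic a L) (hb : Periodic b L) (hc : Periodic c L)
    (p : ℤ) (n : ℕ) : Amat a b c (p + L) n = Amat a b c p n := by
  simp only [Amat, add_right_comm p L, ha _, hb _, hc _]

theorem Amat_mul_eq_pow {l : ℕ} (ha : Periodic a l) (hb : Periodic b l) (hc : Periodic c l)
    (p : ℤ) (m : ℕ) : Amat a b c p (l * m) = Amat a b c p l ^ m := by
  induction m with
  | zero => rfl
  | succ m ih =>
    rw [Nat.mul_succ, Amat_add, ih, pow_succ, Nat.cast_mul, mul_comm (l : ℤ),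
      Amat_add_period (ha.nat_mul m) (hb.nat_mul m) (hc.nat_mul m)]

end TransferMatrix

theorem contK_periodic_det_ne_zero'_general (l : ℕ) (a b c : ℤ → ℂ)
    (ha : ∀ k : ℤ, a (k + l) = a k) (hb : ∀ k : ℤ, b (k + l) = b k)
    (hc : ∀ k : ℤ, c (k + l) = c k) (p : ℤ) (T D d : ℂ)
    (hT : T = (Amat a b c p l).trace) (hD : D = (Amat a b c p l).det)
    (hD0 : D ≠ 0) (hd : d ^ 2 = D) (m : ℕ) :
    contK a b c (p + 1) ((l : ℤ) * m - 1) =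
      d ^ (m - 1) * (Polynomial.Chebyshev.U ℂ ((m : ℤ) - 1)).eval (T / (2 * d))
        * contK a b c (p + 1) ((l : ℤ) - 1) := by
  have hd0 : d ≠ 0 := by
    rintro rfl
    exact hD0 (by rw [← hd, zero_pow two_ne_zero])
  have htr : (Amat a b c p l).trace = 2 * d * (T / (2 * d)) := by
    rw [← hT]
    field_simp
  have hdet : (Amat a b c p l).det = d ^ 2 := by rw [hd, hD]
  rw [← Nat.cast_mul, ← Amat_apply_one_zero, Amat_mul_eq_pow ha hb hc,
    pow_apply_one_zero_fin_two_eq_chebyshev_U htr hdet, Amat_apply_one_zero]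

/-- Periodic continuants (nonzero determinant case), second component: for `l`-periodic
sequences, with `T = tr A_l(p)`, `D = det A_l(p) ≠ 0` and `d² = D`, one has
`K_{lm−1}(p+1) = d^{m−1}·U_{m−1}(T/(2d))·K_{l−1}(p+1)` for all `m ≥ 1`. -/
theorem contK_periodic_det_ne_zero' (l : ℕ) (hl : 1 ≤ l) (a b c : ℤ → ℂ)
    (ha : ∀ k : ℤ, a (k + l) = a k) (hb : ∀ k : ℤ, b (k + l) = b k)
    (hc : ∀ k : ℤ, c (k + l) = c k) (p : ℤ) (T D d : ℂ)
    (hT : T = (Amat a b c p l).trace) (hD : D = (Amat a b c p l).det)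
    (hD0 : D ≠ 0) (hd : d ^ 2 = D) (m : ℕ) (hm : 1 ≤ m) :
    contK a b c (p + 1) ((l : ℤ) * m - 1) =
      d ^ (m - 1) * (Polynomial.Chebyshev.U ℂ ((m : ℤ) - 1)).eval (T / (2 * d))
        * contK a b c (p + 1) ((l : ℤ) - 1) :=
  contK_periodic_det_ne_zero'_general l a b c ha hb hc p T D d hT hD hD0 hd m
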